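/- For every natural number k and every HA-formula φ in Π_k (respectively Σ_k), the theory HA^$ + Σ_k-LEM proves φ^$ ↔ (φ ∨ $). -/

import Mathlib

namespace SemiClassicalArith

/-- Terms of arithmetic: variables (de Bruijn indices) and function symbols
(one symbol of each arity for every code, covering all primitive recursive functions). -/
inductive Term : Type
  | var : ℕ → Term
  | func : (code : ℕ) → (arity : ℕ) → (Fin arity → Term) → Term

namespace Term

/-- Shift all variables `≥ d` up by one. -/
def lift (d : ℕ) : Term → Term
  | var n => if n < d then var n else var (n + 1)
  | func c a ts => func c a fun i => (ts i).lift d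

/-- Binder-removing substitution of `s` for variable `k`. -/
def subst (k : ℕ) (s : Term) : Term → Term
  | var n => if n < k then var n else if n = k then s else var (n - 1)
  | func c a ts => func c a fun i => Term.subst k s (ts i)

/-- In-place replacement of variable `k` by `s` (no shifting of other variables). -/
def repl (k : ℕ) (s : Term) : Term → Term
  | var n => if n = k then s else var n
  | func c a ts => func c a fun i => Term.repl k s (ts i)

/-- Free variables of a term. -/
def fv : Term → Finset ℕ
  | var n => {n}
  | func _ _ ts => Finset.univ.sup fun i => (ts i).fv

/-- The constant zero (function symbol of arity 0, code 0). -/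
def zero : Term := func 0 0 (fun i => i.elim0)

/-- Successor (function symbol of arity 1, code 1). -/
def succ (t : Term) : Term := func 1 1 (fun _ => t)

end Term

/-- Formulas of arithmetic in the language with an extra nullary predicate
symbol `$` (`dollar`), used as a place holder. Quantifiers use de Bruijn indices. -/
inductive Formula : Type
  | falsum : Formula
  | dollar : Formula
  | eq : Term → Term → Formula
  | and : Formula → Formula → Formula
  | or : Formula → Formula → Formula
  | imp : Formula → Formula → Formula
  | all : Formula → Formula
  | ex : Formula → Formula

namespace Formula

def neg (φ : Formula) : Formula := φ.imp falsum

def iff (φ ψ : Formula) : Formula := (φ.imp ψ).and (ψ.imp φ)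

/-- `¬_$ φ`, i.e. `φ → $`. -/
def negD (φ : Formula) : Formula := φ.imp dollar

def lift (d : ℕ) : Formula → Formula
  | falsum => falsum
  | dollar => dollar
  | eq t u => eq (t.lift d) (u.lift d)
  | and φ ψ => and (φ.lift d) (ψ.lift d)
  | or φ ψ => or (φ.lift d) (ψ.lift d)
  | imp φ ψ => imp (φ.lift d) (ψ.lift d)
  | all φ => all (φ.lift (d + 1))
  | ex φ => ex (φ.lift (d + 1))

/-- Binder-removing substitution of term `s` for variable `k`. -/
def subst (k : ℕ) (s : Term) : Formula → Formula
  | falsum => falsum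
  | dollar => dollar
  | eq t u => eq (Term.subst k s t) (Term.subst k s u)
  | and φ ψ => and (Formula.subst k s φ) (Formula.subst k s ψ)
  | or φ ψ => or (Formula.subst k s φ) (Formula.subst k s ψ)
  | imp φ ψ => imp (Formula.subst k s φ) (Formula.subst k s ψ)
  | all φ => all (Formula.subst (k + 1) (s.lift 0) φ)
  | ex φ => ex (Formula.subst (k + 1) (s.lift 0) φ)

/-- In-place replacement of variable `k` by term `s`. -/
def repl (k : ℕ) (s : Term) : Formula → Formula
  | falsum => falsum
  | dollar => dollar
  | eq t u => eq (Term.repl k s t) (Term.repl k s u)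
  | and φ ψ => and (Formula.repl k s φ) (Formula.repl k s ψ)
  | or φ ψ => or (Formula.repl k s φ) (Formula.repl k s ψ)
  | imp φ ψ => imp (Formula.repl k s φ) (Formula.repl k s ψ)
  | all φ => all (Formula.repl (k + 1) (s.lift 0) φ)
  | ex φ => ex (Formula.repl (k + 1) (s.lift 0) φ)

/-- Free variables of a formula. -/
def fv : Formula → Finset ℕ
  | falsum => ∅
  | dollar => ∅
  | eq t u => t.fv ∪ u.fv
  | and φ ψ => φ.fv ∪ ψ.fv
  | or φ ψ => φ.fv ∪ ψ.fv
  | imp φ ψ => φ.fv ∪ ψ.fv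
  | all φ => (φ.fv.erase 0).image (· - 1)
  | ex φ => (φ.fv.erase 0).image (· - 1)

/-- A sentence is a formula with no free variables. -/
def sentence (φ : Formula) : Prop := φ.fv = ∅

/-- The formula is in the language of `HA` (the placeholder `$` does not occur). -/
def noDollar : Formula → Prop
  | falsum => True
  | dollar => False
  | eq _ _ => True
  | and φ ψ => φ.noDollar ∧ ψ.noDollar
  | or φ ψ => φ.noDollar ∧ ψ.noDollar
  | imp φ ψ => φ.noDollar ∧ ψ.noDollar
  | all φ => φ.noDollar
  | ex φ => φ.noDollar

/-- Quantifier-free formula of `HA`. -/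
def isQF : Formula → Prop
  | falsum => True
  | dollar => False
  | eq _ _ => True
  | and φ ψ => φ.isQF ∧ ψ.isQF
  | or φ ψ => φ.isQF ∧ ψ.isQF
  | imp φ ψ => φ.isQF ∧ ψ.isQF
  | all _ => False
  | ex _ => False

/-- Flip `+`/`-` in an alternation path (`true` = `+`, `false` = `-`). -/
def pflip (s : List Bool) : List Bool := s.map (!·)

/-- The set of alternation paths of a formula (Akama–Berardi–Hayashi–Kohlenbach). -/
def alt : Formula → Finset (List Bool)
  | falsum => {([] : List Bool)}
  | dollar => {([] : List Bool)}
  | eq _ _ => {([] : List Bool)}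
  | and φ ψ => φ.alt ∪ ψ.alt
  | or φ ψ => φ.alt ∪ ψ.alt
  | imp φ ψ => φ.alt.image pflip ∪ ψ.alt
  | all φ => φ.alt.image (fun s => if s.head? = some false then s else false :: s)
  | ex φ => φ.alt.image (fun s => if s.head? = some true then s else true :: s)

/-- The degree of a formula: the maximal length of its alternation paths. -/
def degree (φ : Formula) : ℕ := φ.alt.sup List.length

/-- The class `U_k` (for `k ≥ 1`: degree `k` and all maximal paths begin with `-`;
`U_0` is the class of degree-`0` formulas). -/
def inU (k : ℕ) (φ : Formula) : Prop :=
  φ.degree = k ∧ ∀ s ∈ φ.alt, s.length = k → k = 0 ∨ s.head? = some false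

/-- The class `E_k` (for `k ≥ 1`: degree `k` and all maximal paths begin with `+`;
`E_0` is the class of degree-`0` formulas). -/
def inE (k : ℕ) (φ : Formula) : Prop :=
  φ.degree = k ∧ ∀ s ∈ φ.alt, s.length = k → k = 0 ∨ s.head? = some true

/-- The dual of a prenex formula: swap quantifiers and negate the matrix. -/
def dual : Formula → Formula
  | all φ => ex φ.dual
  | ex φ => all φ.dual
  | φ => φ.neg

/-- The `$`-translation (Ishihara's generalized negative translation). -/
def dollarTr : Formula → Formula
  | falsum => dollar
  | dollar => dollar
  | eq t u => (eq t u).negD.negD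
  | and φ ψ => and φ.dollarTr ψ.dollarTr
  | or φ ψ => (or φ.dollarTr ψ.dollarTr).negD.negD
  | imp φ ψ => imp φ.dollarTr ψ.dollarTr
  | all φ => all φ.dollarTr
  | ex φ => (ex φ.dollarTr).negD.negD

/-- The Friedman A-translation: replace every prime formula `P` (including `⊥`)
by `P ∨ *` (here `*` is the placeholder `dollar`). -/
def aTr : Formula → Formula
  | falsum => or falsum dollar
  | dollar => dollar
  | eq t u => or (eq t u) dollar
  | and φ ψ => and φ.aTr ψ.aTr
  | or φ ψ => or φ.aTr ψ.aTr
  | imp φ ψ => imp φ.aTr ψ.aTr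
  | all φ => all φ.aTr
  | ex φ => ex φ.aTr

/-- Prefix `n` universal quantifiers. -/
def allN : Formula → ℕ → Formula
  | φ, 0 => φ
  | φ, n + 1 => Formula.allN φ.all n

/-- The universal closure of a formula. -/
def univClosure (φ : Formula) : Formula := φ.allN (φ.fv.sup Nat.succ)

end Formula

mutual
  /-- The class `Σ_k` of prenex formulas. -/
  inductive IsSigma : ℕ → Formula → Prop
    | qf {φ : Formula} : φ.isQF → IsSigma 0 φ
    | ofPi {k : ℕ} {φ : Formula} : IsPi k φ → IsSigma (k + 1) φ
    | ex {k : ℕ} {φ : Formula} : IsSigma (k + 1) φ → IsSigma (k + 1) φ.ex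
  /-- The class `Π_k` of prenex formulas. -/
  inductive IsPi : ℕ → Formula → Prop
    | qf {φ : Formula} : φ.isQF → IsPi 0 φ
    | ofSigma {k : ℕ} {φ : Formula} : IsSigma k φ → IsPi (k + 1) φ
    | all {k : ℕ} {φ : Formula} : IsPi (k + 1) φ → IsPi (k + 1) φ.all
end

/-- Axioms of Heyting arithmetic `HA` (Hilbert style intuitionistic predicate logic
with equality, plus arithmetical axioms and the induction scheme). -/
inductive HAAx : Formula → Prop
  | axK (φ ψ : Formula) : HAAx (φ.imp (ψ.imp φ))
  | axS (φ ψ χ : Formula) : HAAx ((φ.imp (ψ.imp χ)).imp ((φ.imp ψ).imp (φ.imp χ)))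
  | andI (φ ψ : Formula) : HAAx (φ.imp (ψ.imp (φ.and ψ)))
  | andE1 (φ ψ : Formula) : HAAx ((φ.and ψ).imp φ)
  | andE2 (φ ψ : Formula) : HAAx ((φ.and ψ).imp ψ)
  | orI1 (φ ψ : Formula) : HAAx (φ.imp (φ.or ψ))
  | orI2 (φ ψ : Formula) : HAAx (ψ.imp (φ.or ψ))
  | orE (φ ψ χ : Formula) : HAAx ((φ.imp χ).imp ((ψ.imp χ).imp ((φ.or ψ).imp χ)))
  | efq (φ : Formula) : HAAx (Formula.falsum.imp φ)
  | allE (φ : Formula) (t : Term) : HAAx (φ.all.imp (φ.subst 0 t))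
  | exI (φ : Formula) (t : Term) : HAAx ((φ.subst 0 t).imp φ.ex)
  | allK (φ ψ : Formula) : HAAx ((φ.imp ψ).all.imp (φ.all.imp ψ.all))
  | allVac (φ : Formula) : HAAx (φ.imp (φ.lift 0).all)
  | exE (φ ψ : Formula) : HAAx ((φ.imp (ψ.lift 0)).all.imp (φ.ex.imp ψ))
  | eqRefl (t : Term) : HAAx (Formula.eq t t)
  | eqSubst (t u : Term) (φ : Formula) : HAAx ((Formula.eq t u).imp ((φ.subst 0 t).imp (φ.subst 0 u)))
  | succNeZero (t : Term) : HAAx (Formula.neg (Formula.eq (Term.succ t) Term.zero))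
  | succInj (t u : Term) : HAAx ((Formula.eq (Term.succ t) (Term.succ u)).imp (Formula.eq t u))
  | ind (φ : Formula) : HAAx ((φ.subst 0 Term.zero).imp
      ((((φ.imp (φ.repl 0 (Term.succ (Term.var 0))))).all).imp φ.all))
  | atomDec (t u : Term) : HAAx ((Formula.eq t u).or (Formula.eq t u).neg)

/-- Provability from `HA` (in the language possibly containing `$`)
together with the extra axioms `T`. -/
inductive Proves (T : Set Formula) : Formula → Prop
  | ax {φ : Formula} : φ ∈ T → Proves T φ
  | ha {φ : Formula} : HAAx φ → Proves T φ
  | mp {φ ψ : Formula} : Proves T (φ.imp ψ) → Proves T φ → Proves T ψ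
  | gen {φ : Formula} : Proves T φ → Proves T φ.all

/-- The scheme `Σ_k-LEM`. -/
def sigLEM (k : ℕ) : Set Formula := {ψ | ∃ φ : Formula, IsSigma k φ ∧ ψ = φ.or φ.neg}

/-- The full law of excluded middle for `HA`-formulas; `Proves lemSet` is `PA`-provability. -/
def lemSet : Set Formula := {ψ | ∃ φ : Formula, φ.noDollar ∧ ψ = φ.or φ.neg}

/-- The scheme `F_k-LEM`: excluded middle for `HA`-formulas of degree at most `k`. -/
def fLEM (k : ℕ) : Set Formula :=
  {ψ | ∃ φ : Formula, φ.noDollar ∧ φ.degree ≤ k ∧ ψ = φ.or φ.neg}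

/-- `T` is (the set of extra axioms of) a semi-classical arithmetic:
`HA ⊆ HA + T ⊆ PA`, i.e. all axioms are `HA`-formulas provable in `PA`. -/
def IsSemiClassical (T : Set Formula) : Prop :=
  ∀ φ ∈ T, φ.noDollar ∧ Proves lemSet φ

mutual
  /-- The class `ℛ_{k+1}` (index `k` denotes `ℛ_{k+1}`). -/
  inductive Rcl : ℕ → Formula → Prop
    | base {k : ℕ} {φ : Formula} : φ.degree ≤ k → φ.noDollar → Rcl k φ
    | and {k : ℕ} {φ ψ : Formula} : Rcl k φ → Rcl k ψ → Rcl k (φ.and ψ)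
    | or {k : ℕ} {φ ψ : Formula} : Rcl k φ → Rcl k ψ → Rcl k (φ.or ψ)
    | all {k : ℕ} {φ : Formula} : Rcl k φ → Rcl k φ.all
    | imp {k : ℕ} {φ ψ : Formula} : Jcl k φ → Rcl k ψ → Rcl k (φ.imp ψ)
  /-- The class `𝒥_{k+1}` (index `k` denotes `𝒥_{k+1}`). -/
  inductive Jcl : ℕ → Formula → Prop
    | base {k : ℕ} {φ : Formula} : φ.degree ≤ k → φ.noDollar → Jcl k φ
    | and {k : ℕ} {φ ψ : Formula} : Jcl k φ → Jcl k ψ → Jcl k (φ.and ψ)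
    | or {k : ℕ} {φ ψ : Formula} : Jcl k φ → Jcl k ψ → Jcl k (φ.or ψ)
    | ex {k : ℕ} {φ : Formula} : Jcl k φ → Jcl k φ.ex
    | imp {k : ℕ} {φ ψ : Formula} : Rcl k φ → Jcl k ψ → Jcl k (φ.imp ψ)
end

/-- The class `𝒬_{k+1}` (index `k` denotes `𝒬_{k+1}`): generated from prime formulas by
`∧, ∨, ∀, ∃` and implications `J → Q` with `J ∈ 𝒥_{k+1}`. -/
inductive Qcl : ℕ → Formula → Prop
  | falsum {k : ℕ} : Qcl k Formula.falsum
  | eq {k : ℕ} {t u : Term} : Qcl k (Formula.eq t u)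
  | and {k : ℕ} {φ ψ : Formula} : Qcl k φ → Qcl k ψ → Qcl k (φ.and ψ)
  | or {k : ℕ} {φ ψ : Formula} : Qcl k φ → Qcl k ψ → Qcl k (φ.or ψ)
  | all {k : ℕ} {φ : Formula} : Qcl k φ → Qcl k φ.all
  | ex {k : ℕ} {φ : Formula} : Qcl k φ → Qcl k φ.ex
  | imp {k : ℕ} {φ ψ : Formula} : Jcl k φ → Qcl k ψ → Qcl k (φ.imp ψ)

/-- The class `𝒱_{k+1}` (index `k` denotes `𝒱_{k+1}`): generated from `𝒥_{k+1}` by `∧, ∀`. -/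
inductive Vcl : ℕ → Formula → Prop
  | ofJ {k : ℕ} {φ : Formula} : Jcl k φ → Vcl k φ
  | and {k : ℕ} {φ ψ : Formula} : Vcl k φ → Vcl k ψ → Vcl k (φ.and ψ)
  | all {k : ℕ} {φ : Formula} : Vcl k φ → Vcl k φ.all

/-- The class `EΠ_k`: generated from `Π_k` formulas by `∨` and `∀`. -/
inductive EPi (k : ℕ) : Formula → Prop
  | ofPi {φ : Formula} : IsPi k φ → EPi k φ
  | or {φ ψ : Formula} : EPi k φ → EPi k ψ → EPi k (φ.or ψ)
  | all {φ : Formula} : EPi k φ → EPi k φ.all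

/-- The class `EΣ_{k+1}` (index `k` denotes `EΣ_{k+1}`): existential quantifications
of `EΠ_k` formulas. -/
inductive ESig (k : ℕ) : Formula → Prop
  | ofEPi {φ : Formula} : EPi k φ → ESig k φ
  | ex {φ : Formula} : ESig k φ → ESig k φ.ex

/-- The scheme `Γ-DNEC`: universal closure of `¬¬φ` implies universal closure of `φ`. -/
def dnecSet (Γ : Set Formula) : Set Formula :=
  {ψ | ∃ φ ∈ Γ, ψ = (φ.neg.neg.univClosure).imp φ.univClosure}

/-- The scheme `Γ-DNSC`: universal closure of `¬¬φ` implies `¬¬` of the universal closure. -/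
def dnscSet (Γ : Set Formula) : Set Formula :=
  {ψ | ∃ φ ∈ Γ, ψ = (φ.neg.neg.univClosure).imp φ.univClosure.neg.neg}

/-- Double-negation elimination for sentences in `Γ`. -/
def dneSentSet (Γ : Set Formula) : Set Formula :=
  {ψ | ∃ φ ∈ Γ, φ.sentence ∧ ψ = φ.neg.neg.imp φ}


/-!
Let `φᵈ` be the prenex dual of `φ`. Under `Σ_k`-LEM every `φ ∈ Π_k ∪ Σ_k` satisfies `φ ∨ φᵈ`:
for `φ = ∃ψ` apply excluded middle to `φ`, for `φ = ∀ψ` to `φᵈ = ∃ψᵈ`, and use `ψ ∨ ψᵈ` under the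
quantifier to turn `¬ψ` into `ψᵈ` (resp. `¬ψᵈ` into `ψ`). Already in `HA`, every prenex `φ`
satisfies `φ → φ^$` and `φᵈ → ¬_$ φ^$`, and every formula satisfies `$ → φ^$`. Hence
`φ^$ → φ ∨ $` by cases on `φ ∨ φᵈ`, while `φ ∨ $ → φ^$` needs no excluded middle.
-/

namespace Proves

variable {T : Set Formula} {α β γ : Formula}

theorem imp_refl : Proves T (α.imp α) :=
  .mp (.mp (.ha (.axS α (α.imp α) α)) (.ha (.axK α (α.imp α)))) (.ha (.axK α α))

theorem imp_congr_right (h : Proves T (β.imp γ)) : Proves T ((α.imp β).imp (α.imp γ)) :=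
  .mp (.ha (.axS α β γ)) (.mp (.ha (.axK (β.imp γ) α)) h)

theorem imp_trans (h₁ : Proves T (α.imp β)) (h₂ : Proves T (β.imp γ)) : Proves T (α.imp γ) :=
  .mp (imp_congr_right h₂) h₁

theorem imp_swap (h : Proves T (α.imp (β.imp γ))) : Proves T (β.imp (α.imp γ)) :=
  imp_trans (.ha (.axK β α)) (.mp (.ha (.axS α β γ)) h)

theorem imp_comm : Proves T ((α.imp (β.imp γ)).imp (β.imp (α.imp γ))) :=
  imp_swap (imp_trans (.ha (.axK β α)) (imp_swap (.ha (.axS α β γ))))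

theorem mp_imp : Proves T (α.imp ((α.imp β).imp β)) :=
  imp_swap imp_refl

theorem contra (h : Proves T (α.imp β)) : Proves T ((β.imp γ).imp (α.imp γ)) :=
  imp_swap (imp_trans h mp_imp)

theorem or_imp (h₁ : Proves T (α.imp γ)) (h₂ : Proves T (β.imp γ)) :
    Proves T ((α.or β).imp γ) :=
  .mp (.mp (.ha (.orE α β γ)) h₁) h₂

theorem or_elim (h : Proves T (α.or β)) (h₁ : Proves T (α.imp γ)) (h₂ : Proves T (β.imp γ)) :
    Proves T γ :=
  .mp (or_imp h₁ h₂) h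

theorem or_comm (h : Proves T (α.or β)) : Proves T (β.or α) :=
  or_elim h (.ha (.orI2 β α)) (.ha (.orI1 β α))

theorem iff_intro (h₁ : Proves T (α.imp β)) (h₂ : Proves T (β.imp α)) : Proves T (α.iff β) :=
  .mp (.mp (.ha (.andI _ _)) h₁) h₂

theorem mono {T' : Set Formula} (hT : T ⊆ T') {φ : Formula} (h : Proves T φ) : Proves T' φ := by
  induction h with
  | ax h => exact .ax (hT h)
  | ha h => exact .ha h
  | mp _ _ ih₁ ih₂ => exact .mp ih₁ ih₂
  | gen _ ih => exact .gen ih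

theorem foldr_imp_distrib {Γ : List Formula} :
    Proves T ((Γ.foldr Formula.imp (α.imp β)).imp
      ((Γ.foldr Formula.imp α).imp (Γ.foldr Formula.imp β))) := by
  induction Γ with
  | nil => exact imp_refl
  | cons _ Γ ih => exact imp_trans (imp_congr_right ih) (.ha (.axS _ _ _))

theorem foldr_imp_comm {Γ : List Formula} :
    Proves T ((α.imp (Γ.foldr Formula.imp β)).imp (Γ.foldr Formula.imp (α.imp β))) := by
  induction Γ with
  | nil => exact imp_refl
  | cons _ Γ ih => exact imp_trans imp_comm (imp_congr_right ih)

end Proves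

/-- `Derives T [γ₁, …, γₙ] φ` is `T ⊢ γ₁ → ⋯ → γₙ → φ`. Hypotheses are kept inside the formula
because the deduction theorem fails for open hypotheses in the presence of `gen`. -/
def Derives (T : Set Formula) (Γ : List Formula) (φ : Formula) : Prop :=
  Proves T (Γ.foldr Formula.imp φ)

namespace Derives

variable {T : Set Formula} {Γ : List Formula} {a φ ψ χ : Formula}

theorem toProves (h : Derives T [] φ) : Proves T φ := h

theorem ofProves (h : Proves T φ) : Derives T Γ φ := by
  induction Γ with
  | nil => exact h
  | cons b Γ ih => exact .mp (.ha (.axK _ _)) ih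

theorem weaken (h : Derives T Γ φ) : Derives T (a :: Γ) φ :=
  .mp (.ha (.axK _ _)) h

theorem hyp₀ : Derives T (a :: Γ) a := by
  induction Γ with
  | nil => exact Proves.imp_refl
  | cons b Γ ih => exact Proves.imp_trans ih (.ha (.axK _ b))

theorem hyp (h : a ∈ Γ) : Derives T Γ a := by
  induction Γ with
  | nil => cases h
  | cons b Γ ih =>
    rcases List.mem_cons.mp h with rfl | h
    · exact hyp₀
    · exact (ih h).weaken

theorem mp (h₁ : Derives T Γ (φ.imp ψ)) (h₂ : Derives T Γ φ) : Derives T Γ ψ :=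
  Proves.mp (Proves.mp Proves.foldr_imp_distrib h₁) h₂

theorem intro (h : Derives T (a :: Γ) φ) : Derives T Γ (a.imp φ) :=
  Proves.mp Proves.foldr_imp_comm h

theorem app (h : Proves T (φ.imp ψ)) (d : Derives T Γ φ) : Derives T Γ ψ :=
  (ofProves h).mp d

theorem andI (h₁ : Derives T Γ φ) (h₂ : Derives T Γ ψ) : Derives T Γ (φ.and ψ) :=
  (app (.ha (.andI φ ψ)) h₁).mp h₂

theorem andE1 (h : Derives T Γ (φ.and ψ)) : Derives T Γ φ :=
  app (.ha (.andE1 φ ψ)) h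

theorem andE2 (h : Derives T Γ (φ.and ψ)) : Derives T Γ ψ :=
  app (.ha (.andE2 φ ψ)) h

theorem orI1 (h : Derives T Γ φ) : Derives T Γ (φ.or ψ) :=
  app (.ha (.orI1 φ ψ)) h

theorem orI2 (h : Derives T Γ ψ) : Derives T Γ (φ.or ψ) :=
  app (.ha (.orI2 φ ψ)) h

theorem orE (h : Derives T Γ (φ.or ψ)) (h₁ : Derives T (φ :: Γ) χ)
    (h₂ : Derives T (ψ :: Γ) χ) : Derives T Γ χ :=
  ((app (.ha (.orE φ ψ χ)) (intro h₁)).mp (intro h₂)).mp h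

theorem efq (h : Derives T Γ .falsum) : Derives T Γ φ :=
  app (.ha (.efq φ)) h

end Derives

open Derives

namespace Proves

variable {T : Set Formula} {α β γ : Formula}

theorem neg_imp_of_or (h : Proves T (α.or β)) : Proves T (α.neg.imp β) :=
  toProves (.intro ((ofProves h).orE (.efq ((hyp (a := α.neg) (by simp)).mp hyp₀)) hyp₀))

theorem iff_or_dollar (hor : Proves T (α.or γ)) (hα : Proves T (α.imp β))
    (hγ : Proves T (γ.imp β.negD)) (hdollar : Proves T (Formula.dollar.imp β)) :
    Proves T (β.iff (α.or .dollar)) :=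
  iff_intro
    (toProves (.intro ((ofProves hor).orE (.orI1 hyp₀)
      (.orI2 ((app hγ hyp₀).mp (hyp (a := β) (by simp)))))))
    (or_imp hα hdollar)

end Proves

theorem Term.subst_lift (k : ℕ) (t : Term) : Term.subst k (.var k) (t.lift (k + 1)) = t := by
  induction t generalizing k with
  | var n =>
    rcases lt_trichotomy n k with h | rfl | h
    · simp [Term.lift, Term.subst, h, Nat.lt_succ_of_lt h]
    · simp [Term.lift, Term.subst]
    · simp [Term.lift, Term.subst, Nat.not_lt.mpr h, show ¬n + 1 < k by omega,
        show n + 1 ≠ k by omega]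
  | func c a ts ih => simp [Term.lift, Term.subst, ih]

theorem Formula.subst_lift (k : ℕ) (φ : Formula) : (φ.lift (k + 1)).subst k (.var k) = φ := by
  induction φ generalizing k <;>
    simp_all [Formula.lift, Formula.subst, Term.subst_lift, Term.lift]

namespace Proves

variable {T : Set Formula} {α β χ : Formula}

theorem all_imp_all (h : Proves T (α.imp β)) : Proves T (α.all.imp β.all) :=
  .mp (.ha (.allK α β)) (.gen h)

theorem imp_all_of_lift (h : Proves T ((α.lift 0).imp χ)) : Proves T (α.imp χ.all) :=
  imp_trans (.ha (.allVac α)) (all_imp_all h)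

theorem all_lift_imp : Proves T ((χ.lift 1).all.imp χ) := by
  simpa only [Formula.subst_lift] using Proves.ha (T := T) (.allE (χ.lift 1) (.var 0))

theorem imp_ex_lift : Proves T (χ.imp (χ.lift 1).ex) := by
  simpa only [Formula.subst_lift] using Proves.ha (T := T) (.exI (χ.lift 1) (.var 0))

theorem ex_imp_of_lift (h : Proves T (α.imp (β.lift 0))) : Proves T (α.ex.imp β) :=
  .mp (.ha (.exE α β)) (.gen h)

theorem ex_imp_ex (h : Proves T (α.imp β)) : Proves T (α.ex.imp β.ex) :=
  ex_imp_of_lift (imp_trans h imp_ex_lift)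

end Proves

theorem IsSigma.succ {k : ℕ} {φ : Formula} (h : IsSigma k φ) : IsSigma (k + 1) φ :=
  IsSigma.rec (motive_1 := fun k φ _ => IsSigma (k + 1) φ)
    (motive_2 := fun k φ _ => IsPi (k + 1) φ)
    (fun h => .ofPi (.qf h)) (fun _ ih => .ofPi ih) (fun _ ih => .ex ih)
    (fun h => .ofSigma (.qf h)) (fun _ ih => .ofSigma ih) (fun _ ih => .all ih) h

theorem sigLEM_subset_succ (k : ℕ) : sigLEM k ⊆ sigLEM (k + 1) := by
  rintro ψ ⟨φ, hφ, rfl⟩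
  exact ⟨φ, hφ.succ, rfl⟩

theorem Formula.dual_of_isQF {φ : Formula} (h : φ.isQF) : φ.dual = φ.neg := by
  cases φ <;> first | rfl | exact h.elim

theorem IsPi.dual {k : ℕ} {φ : Formula} (h : IsPi k φ) : IsSigma k φ.dual := by
  have dual_qf {φ : Formula} (h : φ.isQF) : φ.dual.isQF := by
    rw [Formula.dual_of_isQF h]; exact ⟨h, trivial⟩
  exact IsPi.rec (motive_1 := fun k φ _ => IsPi k φ.dual)
    (motive_2 := fun k φ _ => IsSigma k φ.dual)
    (fun h => .qf (dual_qf h)) (fun _ ih => .ofSigma ih) (fun _ ih => .all ih)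
    (fun h => .qf (dual_qf h)) (fun _ ih => .ofPi ih) (fun _ ih => .ex ih) h

theorem prenex_induction {P : ℕ → Formula → Prop}
    (qf : ∀ {φ}, φ.isQF → P 0 φ) (succ : ∀ {k φ}, P k φ → P (k + 1) φ)
    (ex : ∀ {k φ}, IsSigma (k + 1) φ → P (k + 1) φ → P (k + 1) φ.ex)
    (all : ∀ {k φ}, IsPi (k + 1) φ → P (k + 1) φ → P (k + 1) φ.all)
    {k : ℕ} {φ : Formula} (h : IsPi k φ ∨ IsSigma k φ) : P k φ := by
  rcases h with h | h
  · exact IsPi.rec (motive_1 := fun k φ _ => P k φ) (motive_2 := fun k φ _ => P k φ)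
      qf (fun _ => succ) ex qf (fun _ => succ) all h
  · exact IsSigma.rec (motive_1 := fun k φ _ => P k φ) (motive_2 := fun k φ _ => P k φ)
      qf (fun _ => succ) ex qf (fun _ => succ) all h

section

variable {T : Set Formula}

theorem Proves.em_of_isQF {φ : Formula} (h : φ.isQF) : Proves T (φ.or φ.neg) := by
  induction φ with
  | falsum => exact .mp (.ha (.orI2 _ _)) .imp_refl
  | eq t u => exact .ha (.atomDec t u)
  | and α β ihα ihβ =>
    refine toProves ((ofProves (ihα h.1)).orE ((ofProves (ihβ h.2)).weaken.orE ?_ ?_) ?_)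
    · exact .orI1 (.andI (hyp (by simp)) hyp₀)
    · exact .orI2 (.intro ((hyp (a := β.neg) (by simp)).mp (.andE2 hyp₀)))
    · exact .orI2 (.intro ((hyp (a := α.neg) (by simp)).mp (.andE1 hyp₀)))
  | or α β ihα ihβ =>
    refine toProves ((ofProves (ihα h.1)).orE (.orI1 (.orI1 hyp₀)) ?_)
    refine (ofProves (ihβ h.2)).weaken.orE (.orI1 (.orI2 hyp₀)) (.orI2 (.intro (.orE hyp₀ ?_ ?_)))
    · exact (hyp (a := α.neg) (by simp)).mp hyp₀
    · exact (hyp (a := β.neg) (by simp)).mp hyp₀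
  | imp α β ihα ihβ =>
    refine toProves ((ofProves (ihβ h.2)).orE (.orI1 (.intro hyp₀.weaken)) ?_)
    refine (ofProves (ihα h.1)).weaken.orE (.orI2 (.intro ?_)) ?_
    · exact (hyp (a := β.neg) (by simp)).mp (hyp₀.mp (hyp (a := α) (by simp)))
    · exact .orI1 (.intro (.efq ((hyp (a := α.neg) (by simp)).mp hyp₀)))
  | dollar | all | ex => exact h.elim

theorem dollar_imp_dollarTr : ∀ φ : Formula, Proves T (Formula.dollar.imp φ.dollarTr)
  | .falsum | .dollar => .imp_refl
  | .eq _ _ | .or _ _ | .ex _ => .ha (.axK _ _)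
  | .and φ ψ => toProves (.intro (.andI (app (dollar_imp_dollarTr φ) hyp₀)
      (app (dollar_imp_dollarTr ψ) hyp₀)))
  | .imp _ ψ => .imp_trans (dollar_imp_dollarTr ψ) (.ha (.axK _ _))
  | .all φ => .imp_all_of_lift (dollar_imp_dollarTr φ)

theorem dollarTr_of_isQF {φ : Formula} (h : φ.isQF) :
    Proves T (φ.imp φ.dollarTr) ∧ Proves T (φ.neg.imp φ.dollarTr.negD) := by
  induction φ with
  | falsum => exact ⟨.ha (.efq _), toProves (.intro (.intro hyp₀))⟩
  | eq t u =>
    refine ⟨.mp_imp, toProves (.intro (.intro (hyp₀.mp (.intro (.efq ?_)))))⟩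
    exact (hyp (a := (Formula.eq t u).neg) (by simp)).mp hyp₀
  | and α β ihα ihβ =>
    obtain ⟨⟨posα, negα⟩, ⟨posβ, negβ⟩⟩ := And.intro (ihα h.1) (ihβ h.2)
    refine ⟨toProves (.intro (.andI (app posα (.andE1 hyp₀))
      (app posβ (.andE2 hyp₀)))), toProves (.intro (.intro ?_))⟩
    refine (ofProves (Proves.em_of_isQF h.1)).orE ?_ ?_
    · have nβ : Derives T [α, α.dollarTr.and β.dollarTr, (α.and β).neg] β.neg :=
        .intro ((hyp (a := (α.and β).neg) (by simp)).mp (.andI (hyp (a := α) (by simp)) hyp₀))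
      exact (app negβ nβ).mp (.andE2 (hyp (a := α.dollarTr.and β.dollarTr) (by simp)))
    · exact (app negα hyp₀).mp (.andE1 (hyp (a := (α.and β).dollarTr) (by simp)))
  | or α β ihα ihβ =>
    obtain ⟨⟨posα, negα⟩, ⟨posβ, negβ⟩⟩ := And.intro (ihα h.1) (ihβ h.2)
    refine ⟨toProves (.intro (app Proves.mp_imp
      (.orE hyp₀ (.orI1 (app posα hyp₀)) (.orI2 (app posβ hyp₀))))),
      toProves (.intro (.intro (hyp₀.mp (.intro (.orE hyp₀ ?_ ?_)))))⟩
    · refine (app negα (.intro ?_)).mp hyp₀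
      exact (hyp (a := (α.or β).neg) (by simp)).mp (.orI1 hyp₀)
    · refine (app negβ (.intro ?_)).mp hyp₀
      exact (hyp (a := (α.or β).neg) (by simp)).mp (.orI2 hyp₀)
  | imp α β ihα ihβ =>
    obtain ⟨⟨posα, negα⟩, ⟨posβ, negβ⟩⟩ := And.intro (ihα h.1) (ihβ h.2)
    constructor
    · refine toProves (.intro (.intro ((ofProves (Proves.em_of_isQF h.1)).orE ?_ ?_)))
      · exact app posβ ((hyp (a := α.imp β) (by simp)).mp hyp₀)
      · exact app (dollar_imp_dollarTr β) ((app negα hyp₀).mp (hyp (a := α.dollarTr) (by simp)))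
    · -- `¬(α → β)` gives `¬β` and, `α` being decidable, `α`.
      refine toProves (.intro (.intro ?_))
      have nβ : Derives T [α.dollarTr.imp β.dollarTr, (α.imp β).neg] β.neg :=
        .intro ((hyp (a := (α.imp β).neg) (by simp)).mp (.intro (hyp (by simp))))
      have hα : Derives T [α.dollarTr.imp β.dollarTr, (α.imp β).neg] α :=
        (ofProves (Proves.em_of_isQF h.1)).orE hyp₀ (.efq ((hyp (a := (α.imp β).neg) (by simp)).mp
          (.intro (.efq ((hyp (a := α.neg) (by simp)).mp hyp₀)))))
      exact (app negβ nβ).mp (hyp₀.mp (app posα hα))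
  | dollar | all | ex => exact h.elim

theorem dollarTr_of_prenex {k : ℕ} {φ : Formula} (h : IsPi k φ ∨ IsSigma k φ) :
    Proves T (φ.imp φ.dollarTr) ∧ Proves T (φ.dual.imp φ.dollarTr.negD) := by
  refine prenex_induction (P := fun _ φ => Proves T (φ.imp φ.dollarTr) ∧
      Proves T (φ.dual.imp φ.dollarTr.negD)) (fun h => ?_) id (fun {_ φ} _ ih => ?_)
      (fun {_ φ} _ ih => ?_) h
  · rw [Formula.dual_of_isQF h]; exact dollarTr_of_isQF h
  · have : Proves T (φ.dollarTr.ex.imp (φ.dual.all.imp .dollar)) :=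
      .ex_imp_of_lift (.imp_swap (.imp_trans .all_lift_imp ih.2))
    exact ⟨.imp_trans (.ex_imp_ex ih.1) .mp_imp, .imp_trans (.imp_swap this) .mp_imp⟩
  · have : Proves T (φ.dual.ex.imp (φ.dollarTr.all.imp .dollar)) :=
      .ex_imp_of_lift (.imp_swap (.imp_trans .all_lift_imp (.imp_swap ih.2)))
    exact ⟨.all_imp_all ih.1, this⟩

end

theorem or_dual_of_prenex {k : ℕ} {φ : Formula} (h : IsPi k φ ∨ IsSigma k φ) :
    Proves (sigLEM k) (φ.or φ.dual) := by
  refine prenex_induction (P := fun k φ => Proves (sigLEM k) (φ.or φ.dual))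
    (fun h => ?_) (·.mono (sigLEM_subset_succ _)) (fun {k φ} hφ ih => ?_)
    (fun {k φ} hφ ih => ?_) h
  · rw [Formula.dual_of_isQF h]; exact .em_of_isQF h
  · have em : Proves (sigLEM (k + 1)) (φ.ex.or φ.ex.neg) := .ax ⟨φ.ex, hφ.ex, rfl⟩
    have : Proves (sigLEM (k + 1)) (φ.ex.neg.imp φ.dual.all) :=
      .imp_all_of_lift (.imp_trans (.contra .imp_ex_lift) ih.neg_imp_of_or)
    exact em.or_elim (.ha (.orI1 _ _)) (.imp_trans this (.ha (.orI2 _ _)))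
  · have em : Proves (sigLEM (k + 1)) (φ.dual.ex.or φ.dual.ex.neg) :=
      .ax ⟨φ.dual.ex, hφ.dual.ex, rfl⟩
    have : Proves (sigLEM (k + 1)) (φ.dual.ex.neg.imp φ.all) :=
      .imp_all_of_lift (.imp_trans (.contra .imp_ex_lift) ih.or_comm.neg_imp_of_or)
    exact em.or_elim (.ha (.orI2 _ _)) (.imp_trans this (.ha (.orI1 _ _)))

/-- for `φ ∈ Π_k` (resp. `φ ∈ Σ_k`),
`HA^$ + Σ_k-LEM ⊢ φ^$ ↔ φ ∨ $`. -/
theorem dollarTr_prenex (k : ℕ) (φ : Formula) (hφ : IsPi k φ ∨ IsSigma k φ) :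
    Proves (sigLEM k) (φ.dollarTr.iff (φ.or Formula.dollar)) :=
  (or_dual_of_prenex hφ).iff_or_dollar (dollarTr_of_prenex hφ).1 (dollarTr_of_prenex hφ).2
    (dollar_imp_dollarTr φ)

end SemiClassicalArith
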